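/- arXiv:2108.00465 — 2 statements merged into one kernel-verified Lean document; each statement's English description precedes it below -/
import Mathlib

section
/- Let R_ant and R̄_ant be n×n Hermitian matrices with R̄_ant positive definite and R_ant − R̄_ant positive semidefinite (R_ant ⪰ R̄_ant ≻ 0). The function F ↦ ln det(F R_ant Fᴴ) − ln det(F R̄_ant Fᴴ), over full-row-rank m×n matrices F (m ≤ n), is maximized when the rows of Fᴴ span the subspace spanned by m generalized eigenvectors of the pencil (R_ant, R̄_ant) corresponding to the m largest generalized eigenvalues, and the maximum value equals the sum of the logarithms of those m largest generalized eigenvalues. -/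
open Matrix Complex ComplexOrder

noncomputable def logdet {n : ℕ} (M : Matrix (Fin n) (Fin n) ℂ) : ℝ :=
  Real.log (M.det).re

/-- Objective for the analog combiner: `ln det(F R Fᴴ) − ln det(F R̄ Fᴴ)`. -/
noncomputable def combObj {m n : ℕ} (R Rbar : Matrix (Fin n) (Fin n) ℂ)
    (F : Matrix (Fin m) (Fin n) ℂ) : ℝ :=
  logdet (F * R * Fᴴ) - logdet (F * Rbar * Fᴴ)

section Helpers

open Finset Function Equiv

variable {m n : ℕ}

theorem det_mul_rect (A : Matrix (Fin m) (Fin n) ℂ) (B : Matrix (Fin n) (Fin m) ℂ) :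
    det (A * B) = ∑ p : Fin m → Fin n, det (A.submatrix id p) * ∏ i, B (p i) i := by
  rw [det_apply']
  simp only [mul_apply, Finset.prod_univ_sum, Fintype.piFinset_univ, Finset.mul_sum]
  rw [Finset.sum_comm]
  refine Finset.sum_congr rfl fun p _ => ?_
  rw [det_apply', Finset.sum_mul]
  refine Finset.sum_congr rfl fun σ _ => ?_
  rw [Finset.prod_mul_distrib, ← mul_assoc]
  simp [Matrix.submatrix_apply]

noncomputable def monoPerm : ({s : Fin m → Fin n // StrictMono s} × Equiv.Perm (Fin m)) ≃
    {p : Fin m → Fin n // Function.Injective p} := by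
  apply Equiv.ofBijective (fun x => ⟨x.1.1 ∘ x.2, x.1.2.injective.comp x.2.injective⟩)
  constructor
  · rintro ⟨⟨s₁, hs₁⟩, π₁⟩ ⟨⟨s₂, hs₂⟩, π₂⟩ h
    simp only [Subtype.mk.injEq] at h
    have hs : s₁ = s₂ := by
      have inst : WellFoundedLT (Fin m) := inferInstance
      refine (@StrictMono.range_inj (Fin m) (Fin n) _ _ inst _ _ hs₁ hs₂).mp ?_
      rw [← π₁.surjective.range_comp s₁, ← π₂.surjective.range_comp s₂, h]
    subst hs
    have hπ : π₁ = π₂ := by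
      ext i
      exact congrArg Fin.val (hs₁.injective (congrFun h i))
    rw [hπ]
  · rintro ⟨p, hp⟩
    have hT : (Finset.image p univ).card = m := by
      rw [Finset.card_image_of_injective _ hp, card_univ, Fintype.card_fin]
    have hmem : ∀ i, p i ∈ Finset.image p univ := fun i => Finset.mem_image_of_mem p (mem_univ i)
    set T := Finset.image p univ with hTdef
    let π₀ : Fin m → Fin m := fun i => (T.orderIsoOfFin hT).symm ⟨p i, hmem i⟩
    have hπ₀ : Function.Injective π₀ := by
      intro a b hab
      apply hp
      have h2 : (⟨p a, hmem a⟩ : (T : Finset (Fin n))) = ⟨p b, hmem b⟩ := by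
        simpa [π₀] using congrArg (T.orderIsoOfFin hT) hab
      exact Subtype.ext_iff.mp h2
    refine ⟨⟨⟨T.orderEmbOfFin hT, (T.orderEmbOfFin hT).strictMono⟩,
      Equiv.ofBijective π₀ ((Finite.injective_iff_bijective).mp hπ₀)⟩, ?_⟩
    apply Subtype.ext
    funext i
    show T.orderEmbOfFin hT (π₀ i) = p i
    rw [← Finset.coe_orderIsoOfFin_apply]
    simp [π₀]

theorem sum_injective_eq (f : (Fin m → Fin n) → ℂ) :
    ∑ p ∈ univ.filter (fun p : Fin m → Fin n => Function.Injective p), f p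
      = ∑ s ∈ univ.filter (fun p : Fin m → Fin n => StrictMono p),
          ∑ π : Equiv.Perm (Fin m), f (s ∘ π) := by
  rw [Finset.sum_subtype (p := fun p : Fin m → Fin n => Function.Injective p)
    (univ.filter (fun p : Fin m → Fin n => Function.Injective p)) (by simp) f]
  rw [← Equiv.sum_comp (monoPerm (m := m) (n := n)) (fun x => f x.1)]
  rw [Fintype.sum_prod_type]
  rw [Finset.sum_subtype (p := fun p : Fin m → Fin n => StrictMono p)
    (univ.filter (fun p : Fin m → Fin n => StrictMono p)) (by simp)
    (fun s => ∑ π : Equiv.Perm (Fin m), f (s ∘ π))]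
  rfl

theorem cauchy_binet (A : Matrix (Fin m) (Fin n) ℂ) (B : Matrix (Fin n) (Fin m) ℂ) :
    det (A * B) = ∑ p ∈ univ.filter (fun p : Fin m → Fin n => StrictMono p),
      det (A.submatrix id p) * det (B.submatrix p id) := by
  rw [det_mul_rect]
  have h2 : ∑ p : Fin m → Fin n, det (A.submatrix id p) * ∏ i, B (p i) i
      = ∑ p ∈ univ.filter (fun p : Fin m → Fin n => Function.Injective p),
          det (A.submatrix id p) * ∏ i, B (p i) i := by
    refine (Finset.sum_filter_of_ne ?_).symm
    intro p _ hne
    by_contra hp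
    rw [Function.not_injective_iff] at hp
    obtain ⟨a, b, hab, hne'⟩ := hp
    exact hne (by rw [Matrix.det_zero_of_column_eq hne' (fun k => by simp [hab]), zero_mul])
  rw [h2, sum_injective_eq]
  refine Finset.sum_congr rfl fun s hs => ?_
  have hcol : ∀ π : Equiv.Perm (Fin m), A.submatrix id (s ∘ π)
      = (A.submatrix id s).submatrix id π := by
    intro π; rw [Matrix.submatrix_submatrix]; rfl
  calc ∑ π : Equiv.Perm (Fin m), det (A.submatrix id (s ∘ π)) * ∏ i, B ((s ∘ π) i) i
      = ∑ π : Equiv.Perm (Fin m),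
          det (A.submatrix id s) * (((Equiv.Perm.sign π : ℤ) : ℂ) * ∏ i, B (s (π i)) i) := by
        refine Finset.sum_congr rfl fun π _ => ?_
        rw [hcol, Matrix.det_permute']
        ring_nf
        rfl
    _ = det (A.submatrix id s) * det (B.submatrix s id) := by
        rw [← Finset.mul_sum]
        congr 1
        rw [det_apply']
        simp [Matrix.submatrix_apply]

theorem gram_re (K : Matrix (Fin m) (Fin n) ℂ) (d : Fin n → ℝ) :
    (det (K * diagonal (fun j => (d j : ℂ)) * Kᴴ)).re
      = ∑ p ∈ univ.filter (fun p : Fin m → Fin n => StrictMono p),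
          (∏ i, d (p i)) * Complex.normSq (det (K.submatrix id p)) := by
  rw [cauchy_binet (K * diagonal (fun j => (d j : ℂ))) Kᴴ]
  have hterm : ∀ p : Fin m → Fin n,
      det ((K * diagonal (fun j => (d j : ℂ))).submatrix id p) * det (Kᴴ.submatrix p id)
      = (((∏ i, d (p i)) * Complex.normSq (det (K.submatrix id p)) : ℝ) : ℂ) := by
    intro p
    have e1 : (K * diagonal (fun j => (d j : ℂ))).submatrix id p
        = (K.submatrix id p) * diagonal (fun i => (d (p i) : ℂ)) := by
      ext i j
      simp [Matrix.mul_diagonal, Matrix.submatrix_apply]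
    have e2 : Kᴴ.submatrix p id = (K.submatrix id p)ᴴ := by
      rw [Matrix.conjTranspose_submatrix]
    rw [e1, e2, Matrix.det_mul, Matrix.det_diagonal, Matrix.det_conjTranspose]
    push_cast [Complex.normSq_eq_conj_mul_self]
    rw [show (star (K.submatrix id p).det) = (starRingEnd ℂ) (K.submatrix id p).det from rfl]
    ring
  rw [Finset.sum_congr rfl (fun p _ => hterm p)]
  rw [← Complex.ofReal_sum]
  exact Complex.ofReal_re _

theorem strictMono_le_apply {s : Fin m → Fin n} (hs : StrictMono s) (i : Fin m) :
    (i : ℕ) ≤ (s i : ℕ) := by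
  have key : ∀ k, ∀ hk : k < m, k ≤ (s ⟨k, hk⟩ : ℕ) := by
    intro k
    induction k with
    | zero => intro hk; exact Nat.zero_le _
    | succ k ih =>
      intro hk
      have hk' : k < m := Nat.lt_of_succ_lt hk
      have h1 := ih hk'
      have h2 : s ⟨k, hk'⟩ < s ⟨k + 1, hk⟩ := hs (by simp [Fin.lt_def])
      have h3 := Fin.lt_def.mp h2
      omega
  simpa using key i.val i.isLt

theorem prod_le_top (hmn : m ≤ n) (f : Fin n → ℝ) (h0 : ∀ j, 0 ≤ f j) (τ : Equiv.Perm (Fin n))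
    (hτ : Antitone (f ∘ τ)) (s : Fin m → Fin n) (hs : Function.Injective s) :
    ∏ i, f (s i) ≤ ∏ i : Fin m, f (τ (Fin.castLE hmn i)) := by
  set g : Fin m → Fin n := fun i => τ.symm (s i) with hg
  have hginj : Function.Injective g := fun a b hab => hs (τ.symm.injective.eq_iff.mp hab)
  have hT : (Finset.image g univ).card = m := by
    rw [Finset.card_image_of_injective _ hginj, card_univ, Fintype.card_fin]
  set T := Finset.image g univ with hTdef
  have step1 : ∏ i, f (s i) = ∏ i, (f ∘ τ) (g i) := by
    refine Finset.prod_congr rfl fun i _ => ?_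
    simp [hg, Function.comp]
  have step2 : ∏ i, (f ∘ τ) (g i) = ∏ x ∈ T, (f ∘ τ) x :=
    (Finset.prod_image (fun a _ b _ hab => hginj hab)).symm
  have hTemb : Finset.image (fun i => T.orderEmbOfFin hT i) univ = T := by
    apply Finset.coe_injective
    rw [Finset.coe_image, Finset.coe_univ, Set.image_univ]
    exact Finset.range_orderEmbOfFin T hT
  have step3 : ∏ x ∈ T, (f ∘ τ) x = ∏ i, (f ∘ τ) (T.orderEmbOfFin hT i) := by
    conv_lhs => rw [← hTemb]
    exact Finset.prod_image (fun a _ b _ hab => (T.orderEmbOfFin hT).injective hab)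
  have step4 : ∏ i, (f ∘ τ) (T.orderEmbOfFin hT i) ≤ ∏ i : Fin m, (f ∘ τ) (Fin.castLE hmn i) := by
    refine Finset.prod_le_prod (fun i _ => h0 _) (fun i _ => ?_)
    refine hτ ?_
    rw [Fin.le_def]
    exact strictMono_le_apply (T.orderEmbOfFin hT).strictMono i
  rw [step1, step2, step3]
  exact step4

open Module in
theorem posDef_conj {M : Matrix (Fin n) (Fin n) ℂ} (hM : M.PosDef)
    (K : Matrix (Fin m) (Fin n) ℂ) (hK : K.rank = m) : (K * M * Kᴴ).PosDef := by
  have hinj : Function.Injective (Kᴴ.mulVecLin) := by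
    rw [← LinearMap.ker_eq_bot]
    have hrank : Kᴴ.rank = m := by rw [Matrix.rank_conjTranspose, hK]
    have h1 := Kᴴ.mulVecLin.finrank_range_add_finrank_ker
    rw [show finrank ℂ (LinearMap.range Kᴴ.mulVecLin) = m from hrank] at h1
    rw [show finrank ℂ (Fin m → ℂ) = m from by simp] at h1
    exact Submodule.finrank_eq_zero.mp (by omega)
  refine Matrix.PosDef.of_dotProduct_mulVec_pos ?_ (fun x hx => ?_)
  · show (K * M * Kᴴ)ᴴ = K * M * Kᴴ
    rw [Matrix.conjTranspose_mul, Matrix.conjTranspose_mul, Matrix.conjTranspose_conjTranspose,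
      hM.1.eq, Matrix.mul_assoc]
  · have hy : Kᴴ *ᵥ x ≠ 0 := by
      intro h
      exact hx (hinj (by simpa using h))
    have h1 : (K * M * Kᴴ) *ᵥ x = K *ᵥ (M *ᵥ (Kᴴ *ᵥ x)) := by
      rw [Matrix.mulVec_mulVec, Matrix.mulVec_mulVec]
    rw [h1, Matrix.dotProduct_mulVec,
      show star x ᵥ* K = star (Kᴴ *ᵥ x) from by
        rw [Matrix.star_mulVec, Matrix.conjTranspose_conjTranspose]]
    exact hM.dotProduct_mulVec_pos hy

end Helpers

section Main

open Finset Function Equiv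

/-- the analog-combiner objective is maximized by `m` generalized
eigenvectors of the pencil `(R_ant, R̄_ant)` and the maximum equals the sum of the
logarithms of the selected (largest) generalized eigenvalues. -/
theorem analog_combiner_opt {m n : ℕ} (hmn : m ≤ n)
    (R Rbar : Matrix (Fin n) (Fin n) ℂ)
    (hRbar : Rbar.PosDef) (hdiff : (R - Rbar).PosSemidef) :
    ∃ (F : Matrix (Fin m) (Fin n) ℂ) (σ : Fin m → ℝ),
      F.rank = m ∧
      (∀ i : Fin m,
        R *ᵥ (fun j => star (F i j)) = (σ i : ℂ) • (Rbar *ᵥ (fun j => star (F i j)))) ∧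
      (∀ G : Matrix (Fin m) (Fin n) ℂ, G.rank = m → combObj R Rbar G ≤ combObj R Rbar F) ∧
      combObj R Rbar F = ∑ i : Fin m, Real.log (σ i) := by
  classical
  have hR : R.PosDef := by
    have h := hRbar.add_posSemidef hdiff
    rwa [add_sub_cancel] at h
  obtain ⟨L, hLherm, hLL⟩ : ∃ L : Matrix (Fin n) (Fin n) ℂ, L.IsHermitian ∧ L * L = Rbar := by
    open scoped MatrixOrder in
    exact ⟨CFC.sqrt Rbar, (CFC.sqrt_nonneg Rbar).posSemidef.1,
      CFC.sqrt_mul_sqrt_self Rbar hRbar.posSemidef.nonneg⟩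
  have hLdet : IsUnit L.det := by
    have h2 : L.det * L.det = Rbar.det := by rw [← Matrix.det_mul, hLL]
    have h3 : Rbar.det ≠ 0 := hRbar.det_pos.ne'
    exact isUnit_iff_ne_zero.mpr (fun h => h3 (by rw [← h2, h, mul_zero]))
  have hLi : L * L⁻¹ = 1 := Matrix.mul_nonsing_inv L hLdet
  have hiL : L⁻¹ * L = 1 := Matrix.nonsing_inv_mul L hLdet
  have hLinvherm : (L⁻¹)ᴴ = L⁻¹ := by
    rw [Matrix.conjTranspose_nonsing_inv, hLherm.eq]
  have hLinvdet : IsUnit (L⁻¹).det := by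
    have := Matrix.det_mul L⁻¹ L
    rw [hiL, Matrix.det_one] at this
    exact IsUnit.of_mul_eq_one _ this.symm
  have hLinvrank : (L⁻¹).rank = n := by
    have h := Matrix.rank_mul_eq_left_of_isUnit_det L⁻¹ (1 : Matrix (Fin n) (Fin n) ℂ) hLinvdet
    rw [Matrix.one_mul] at h
    rw [h, Matrix.rank_one, Fintype.card_fin]
  set S := L⁻¹ * R * L⁻¹ with hSdef
  have hSpos : S.PosDef := by
    have h : S = L⁻¹ * R * (L⁻¹)ᴴ := by rw [hLinvherm]
    rw [h]
    exact posDef_conj hR L⁻¹ hLinvrank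
  have hS : S.IsHermitian := hSpos.1
  set d : Fin n → ℝ := hS.eigenvalues with hddef
  have hdpos : ∀ j, 0 < d j := fun j => hSpos.eigenvalues_pos j
  set U : Matrix (Fin n) (Fin n) ℂ := (hS.eigenvectorUnitary : Matrix (Fin n) (Fin n) ℂ)
    with hUdef
  have hUmem := hS.eigenvectorUnitary.2
  rw [Unitary.mem_iff] at hUmem
  have hUU : Uᴴ * U = 1 := by
    rw [← Matrix.star_eq_conjTranspose]; exact hUmem.1
  have hUUt : U * Uᴴ = 1 := by
    rw [← Matrix.star_eq_conjTranspose]; exact hUmem.2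
  have hspec : S = U * Matrix.diagonal (fun j => (d j : ℂ)) * Uᴴ := by
    have h := hS.spectral_theorem
    rw [← Matrix.star_eq_conjTranspose]
    exact h
  -- collapse lemmas
  have cLL : ∀ (k : ℕ) (X : Matrix (Fin n) (Fin k) ℂ), L * (L⁻¹ * X) = X := fun k X => by
    rw [← Matrix.mul_assoc, hLi, Matrix.one_mul]
  have cLiL : ∀ (k : ℕ) (X : Matrix (Fin n) (Fin k) ℂ), L⁻¹ * (L * X) = X := fun k X => by
    rw [← Matrix.mul_assoc, hiL, Matrix.one_mul]
  have cUU : ∀ (k : ℕ) (X : Matrix (Fin n) (Fin k) ℂ), Uᴴ * (U * X) = X := fun k X => by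
    rw [← Matrix.mul_assoc, hUU, Matrix.one_mul]
  have cUUt : ∀ (k : ℕ) (X : Matrix (Fin n) (Fin k) ℂ), U * (Uᴴ * X) = X := fun k X => by
    rw [← Matrix.mul_assoc, hUUt, Matrix.one_mul]
  have hRdec : R = L * S * L := by
    rw [hSdef]
    have h : L * (L⁻¹ * R * L⁻¹) * L = (L * L⁻¹) * (R * (L⁻¹ * L)) := by
      simp only [Matrix.mul_assoc]
    rw [h, hLi, hiL, Matrix.one_mul, Matrix.mul_one]
  -- sorting
  set τ : Equiv.Perm (Fin n) := Tuple.sort (fun j => -(d j)) with hτdef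
  have hanti : Antitone (d ∘ τ) := by
    intro a b hab
    have h := Tuple.monotone_sort (fun j => -(d j)) hab
    simpa using h
  set sel : Fin m → Fin n := fun i => τ (Fin.castLE hmn i) with hseldef
  have hselinj : Function.Injective sel := fun a b hab =>
    Fin.castLE_injective hmn (τ.injective hab)
  set σ : Fin m → ℝ := fun i => d (sel i) with hσdef
  have hσpos : ∀ i, 0 < σ i := fun i => hdpos (sel i)
  -- the optimal F
  set W : Matrix (Fin n) (Fin n) ℂ := Uᴴ * L⁻¹ with hWdef
  set F : Matrix (Fin m) (Fin n) ℂ := W.submatrix sel id with hFdef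
  have hWconj : Wᴴ = L⁻¹ * U := by
    rw [hWdef, Matrix.conjTranspose_mul, hLinvherm, Matrix.conjTranspose_conjTranspose]
  have hWRW : W * R * Wᴴ = Matrix.diagonal (fun j => (d j : ℂ)) := by
    rw [hWconj, hWdef, hRdec, hspec]
    simp only [Matrix.mul_assoc]
    rw [cLL n U, hUU, Matrix.mul_one, cLiL n _, cUU n _]
  have hWRbarW : W * Rbar * Wᴴ = 1 := by
    rw [hWconj, hWdef, ← hLL]
    simp only [Matrix.mul_assoc]
    rw [cLL n U, cLiL n _, hUU]
  have hsubmul : ∀ (P Q Z : Matrix (Fin n) (Fin n) ℂ),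
      (P.submatrix sel id) * Q * (Z.submatrix id sel) = (P * Q * Z).submatrix sel sel := by
    intro P Q Z
    ext i j
    simp [Matrix.mul_apply, Finset.sum_mul]
  have hFH : Fᴴ = Wᴴ.submatrix id sel := by
    rw [hFdef, Matrix.conjTranspose_submatrix]
  have hFR : F * R * Fᴴ = Matrix.diagonal (fun i => (σ i : ℂ)) := by
    rw [hFdef, hFH, hsubmul, hWRW, Matrix.submatrix_diagonal _ sel hselinj]
    rfl
  have hFRbar : F * Rbar * Fᴴ = 1 := by
    rw [hFdef, hFH, hsubmul, hWRbarW, Matrix.submatrix_one sel hselinj]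
  -- rank of F
  have hFrank : F.rank = m := by
    have h1 : F * (Rbar * Fᴴ) = 1 := by rw [← Matrix.mul_assoc, hFRbar]
    refine le_antisymm (F.rank_le_card_height.trans (by simp)) ?_
    calc m = (1 : Matrix (Fin m) (Fin m) ℂ).rank := by rw [Matrix.rank_one, Fintype.card_fin]
      _ = (F * (Rbar * Fᴴ)).rank := by rw [h1]
      _ ≤ F.rank := Matrix.rank_mul_le_left _ _
  -- eigen equations
  have hLc : ∀ a b, star (L⁻¹ a b) = L⁻¹ b a := by
    intro a b
    conv_rhs => rw [← hLinvherm]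
    rfl
  have hstarF : ∀ i, (fun j => star (F i j)) = fun j => (L⁻¹ * U) j (sel i) := by
    intro i
    funext j
    show star (W (sel i) j) = _
    rw [hWdef]
    simp only [Matrix.mul_apply, star_sum, star_mul', Matrix.conjTranspose_apply, star_star]
    refine Finset.sum_congr rfl fun k _ => ?_
    rw [hLc k j]
    ring
  have hRV : R * (L⁻¹ * U) = (L * U) * Matrix.diagonal (fun j => (d j : ℂ)) := by
    rw [hRdec, hspec]
    simp only [Matrix.mul_assoc]
    rw [cLL n U, hUU, Matrix.mul_one]
  have hRbarV : Rbar * (L⁻¹ * U) = L * U := by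
    rw [← hLL]
    simp only [Matrix.mul_assoc]
    rw [cLL n U]
  have hcolV : ∀ (M : Matrix (Fin n) (Fin n) ℂ) (c : Fin n),
      (M *ᵥ (fun j => (L⁻¹ * U) j c)) = fun q => (M * (L⁻¹ * U)) q c := by
    intro M c
    funext q
    simp [Matrix.mulVec, Matrix.mul_apply, dotProduct]
  have heig : ∀ i, R *ᵥ (fun j => star (F i j)) = (σ i : ℂ) • (Rbar *ᵥ fun j => star (F i j)) := by
    intro i
    rw [hstarF i, hcolV R (sel i), hcolV Rbar (sel i), hRV, hRbarV]
    funext q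
    rw [Pi.smul_apply, Matrix.mul_diagonal]
    simp only [smul_eq_mul]
    ring
  -- objective value at F
  have hcF : combObj R Rbar F = ∑ i, Real.log (σ i) := by
    rw [combObj, hFR, hFRbar, logdet, logdet, Matrix.det_one, Matrix.det_diagonal]
    rw [show (∏ i, (σ i : ℂ)) = ((∏ i, σ i : ℝ) : ℂ) from by push_cast; rfl]
    rw [Complex.ofReal_re, Complex.one_re, Real.log_one, sub_zero]
    exact Real.log_prod (fun i _ => (hσpos i).ne')
  -- upper bound
  have hdetU : IsUnit U.det := by
    have h := Matrix.det_mul Uᴴ U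
    rw [hUU, Matrix.det_one] at h
    exact IsUnit.of_mul_eq_one _ (by rw [mul_comm] at h; exact h.symm)
  have hdetLU : IsUnit (L * U).det := by
    rw [Matrix.det_mul]; exact hLdet.mul hdetU
  have hbound : ∀ G : Matrix (Fin m) (Fin n) ℂ, G.rank = m →
      combObj R Rbar G ≤ ∑ i, Real.log (σ i) := by
    intro G hG
    set K := G * (L * U) with hKdef
    have hGH : Gᴴ = Gᴴ := rfl
    have hKH : Kᴴ = Uᴴ * (L * Gᴴ) := by
      rw [hKdef, Matrix.conjTranspose_mul, Matrix.conjTranspose_mul, hLherm.eq,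
        Matrix.mul_assoc]
    have hGR : G * R * Gᴴ = K * Matrix.diagonal (fun j => (d j : ℂ)) * Kᴴ := by
      rw [hKdef, hKH, hRdec, hspec]
      simp only [Matrix.mul_assoc]
    have hGRbar : G * Rbar * Gᴴ = K * Kᴴ := by
      rw [hKdef, hKH, ← hLL]
      simp only [Matrix.mul_assoc]
      rw [cUUt m (L * Gᴴ)]
    have hPD1 : (G * R * Gᴴ).PosDef := posDef_conj hR G hG
    have hPD2 : (G * Rbar * Gᴴ).PosDef := posDef_conj hRbar G hG
    have ha : 0 < (G * R * Gᴴ).det.re := by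
      have h := hPD1.det_pos
      exact (Complex.lt_def.mp h).1
    have hb : 0 < (G * Rbar * Gᴴ).det.re := by
      have h := hPD2.det_pos
      exact (Complex.lt_def.mp h).1
    have hσprod : 0 < ∏ i, σ i := Finset.prod_pos fun i _ => hσpos i
    have hkey : (G * R * Gᴴ).det.re ≤ (∏ i, σ i) * (G * Rbar * Gᴴ).det.re := by
      rw [hGR, hGRbar]
      have e2 := gram_re K (fun _ => (1 : ℝ))
      rw [show K * (Matrix.diagonal (fun j => ((1:ℝ) : ℂ)) : Matrix (Fin n) (Fin n) ℂ) * Kᴴ = K * Kᴴ from by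
        simp [Matrix.diagonal_one, Matrix.mul_one]] at e2
      rw [gram_re K d, e2, Finset.mul_sum]
      refine Finset.sum_le_sum fun p hp => ?_
      have hpmono : StrictMono p := (Finset.mem_filter.mp hp).2
      have h1 : ∏ i, d (p i) ≤ ∏ i, σ i :=
        prod_le_top hmn d (fun j => (hdpos j).le) τ hanti p hpmono.injective
      have h2 : (0:ℝ) ≤ Complex.normSq (det (K.submatrix id p)) := Complex.normSq_nonneg _
      simp only [Finset.prod_const_one, one_mul]
      exact mul_le_mul_of_nonneg_right h1 h2
    rw [combObj, logdet, logdet]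
    have hlog1 : Real.log (G * R * Gᴴ).det.re ≤ Real.log ((∏ i, σ i) * (G * Rbar * Gᴴ).det.re) :=
      Real.log_le_log ha hkey
    rw [Real.log_mul hσprod.ne' hb.ne'] at hlog1
    have hlogp : Real.log (∏ i, σ i) = ∑ i, Real.log (σ i) :=
      Real.log_prod (fun i _ => (hσpos i).ne')
    linarith
  exact ⟨F, σ, hFrank, heig, fun G hG => (hbound G hG).trans_eq hcF.symm, hcF⟩

end Main
end

section
/- Let Σ₁ and Σ₂ be d×d Hermitian positive definite matrices that commute (e.g., simultaneously diagonalizable in the generalized-eigenvector basis), and w > 0. The function P ↦ w · ln det(I + Σ₁ P) − tr(Σ₂ P), over Hermitian positive semidefinite matrices P that are diagonal in the common eigenbasis, is maximized at P* = (w Σ₂⁻¹ − Σ₁⁻¹)⁺, where (·)⁺ projects each eigenvalue onto the nonnegative reals; i.e., the optimal power allocation is a water-filling solution. -/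
open Matrix Complex ComplexOrder

/-- The positive semidefinite part `(X)⁺` of a matrix, obtained (when `X` is Hermitian)
by truncating the negative eigenvalues to zero in its spectral decomposition. -/
noncomputable def psdPart {d : ℕ} (X : Matrix (Fin d) (Fin d) ℂ) :
    Matrix (Fin d) (Fin d) ℂ :=
  if hX : X.IsHermitian then
    (hX.eigenvectorUnitary : Matrix (Fin d) (Fin d) ℂ) *
      Matrix.diagonal (fun i => ((max (hX.eigenvalues i) 0 : ℝ) : ℂ)) *
      (star (hX.eigenvectorUnitary : Matrix (Fin d) (Fin d) ℂ))
  else 0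

namespace WFAux

open Polynomial

variable {d : ℕ}

local notation "Mat" => Matrix (Fin d) (Fin d) ℂ

lemma commute_aeval {Y X : Mat} (h : Commute Y X) (q : ℂ[X]) :
    Commute Y (aeval X q) := by
  induction q using Polynomial.induction_on' with
  | add p r hp hr => simpa [map_add] using hp.add_right hr
  | monomial n a =>
      rw [aeval_monomial]
      exact Commute.mul_right ((Algebra.commutes a Y).symm) (h.pow_right n)

lemma aeval_conj {U M : Mat} (h1 : U * star U = 1) (h2 : star U * U = 1)
    (q : ℂ[X]) : aeval (U * M * star U) q = U * aeval M q * star U := by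
  have hpow : ∀ k : ℕ, (U * M * star U) ^ k = U * M ^ k * star U := by
    intro k; induction k with
    | zero => simp [pow_zero, h1]
    | succ k ih =>
        rw [pow_succ, ih, pow_succ]
        calc U * M ^ k * star U * (U * M * star U)
            = U * M ^ k * (star U * U) * M * star U := by
              simp only [Matrix.mul_assoc]
          _ = U * (M ^ k * M) * star U := by
              rw [h2]; simp only [Matrix.mul_assoc, Matrix.mul_one, Matrix.one_mul]
  induction q using Polynomial.induction_on' with
  | add p r hp hr => simp [map_add, hp, hr, Matrix.mul_add, Matrix.add_mul]
  | monomial n a =>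
      rw [aeval_monomial, aeval_monomial, hpow]
      rw [Algebra.algebraMap_eq_smul_one]
      simp only [smul_mul_assoc, Matrix.one_mul, Matrix.mul_smul, Matrix.smul_mul]

lemma aeval_diagonal (v : Fin d → ℂ) (q : ℂ[X]) :
    aeval (Matrix.diagonal v) q = Matrix.diagonal (fun i => eval (v i) q) := by
  have h := aeval_algHom_apply (Matrix.diagonalAlgHom (n := Fin d) (α := ℂ) ℂ) v q
  have hd : (Matrix.diagonalAlgHom (n := Fin d) (α := ℂ) ℂ) v = Matrix.diagonal v := rfl
  rw [hd] at h
  rw [h]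
  show Matrix.diagonal (aeval v q) = _
  have hv : (aeval v q) = fun i => eval (v i) q := by
    funext i
    have h2 := aeval_algHom_apply (Pi.evalAlgHom ℂ (fun _ : Fin d => ℂ) i) v q
    have h3 : (Pi.evalAlgHom ℂ (fun _ : Fin d => ℂ) i) (aeval v q) = (aeval v q) i := rfl
    rw [h3] at h2
    rw [← h2]
    rw [Polynomial.coe_aeval_eq_eval]; rfl
  rw [hv]

lemma matFun_eq_aeval {X : Mat} (hX : X.IsHermitian) (f : ℝ → ℝ) :
    ∃ q : ℂ[X], (hX.eigenvectorUnitary : Mat) *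
      Matrix.diagonal (fun i => ((f (hX.eigenvalues i) : ℝ) : ℂ)) *
      (star (hX.eigenvectorUnitary : Mat)) = aeval X q := by
  classical
  set U : Mat := (hX.eigenvectorUnitary : Mat) with hU
  have h1 : U * star U = 1 := Matrix.mem_unitaryGroup_iff.mp hX.eigenvectorUnitary.2
  have h2 : star U * U = 1 := Matrix.mem_unitaryGroup_iff'.mp hX.eigenvectorUnitary.2
  set s : Finset ℂ := Finset.univ.image (fun i : Fin d => ((hX.eigenvalues i : ℝ) : ℂ)) with hs
  set r : ℂ → ℂ := fun z => ((f z.re : ℝ) : ℂ) with hr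
  refine ⟨Lagrange.interpolate s id r, ?_⟩
  conv_rhs => rw [hX.spectral_theorem, Unitary.conjStarAlgAut_apply]
  rw [aeval_conj h1 h2, aeval_diagonal]
  have hfun : (fun i => ((f (hX.eigenvalues i) : ℝ) : ℂ)) =
      (fun i => eval ((RCLike.ofReal ∘ hX.eigenvalues) i) (Lagrange.interpolate s id r)) := by
    funext i
    have hmem : ((hX.eigenvalues i : ℝ) : ℂ) ∈ s :=
      Finset.mem_image_of_mem _ (Finset.mem_univ i)
    have hev := Lagrange.eval_interpolate_at_node r (Set.injOn_id _) hmem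
    simp only [id] at hev
    show ((f (hX.eigenvalues i) : ℝ) : ℂ) =
      eval ((hX.eigenvalues i : ℝ) : ℂ) (Lagrange.interpolate s id r)
    rw [hev, hr]
    simp
  rw [hfun]

lemma commute_matFun {Y X : Mat} (hX : X.IsHermitian) (f : ℝ → ℝ) (h : Commute Y X) :
    Commute Y ((hX.eigenvectorUnitary : Mat) *
      Matrix.diagonal (fun i => ((f (hX.eigenvalues i) : ℝ) : ℂ)) *
      (star (hX.eigenvectorUnitary : Mat))) := by
  obtain ⟨q, hq⟩ := matFun_eq_aeval hX f
  rw [hq]; exact commute_aeval h q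

noncomputable def psdSqrt {A : Mat} (hA : A.PosSemidef) : Mat :=
  (hA.1.eigenvectorUnitary : Mat) *
    Matrix.diagonal (fun i => ((Real.sqrt (hA.1.eigenvalues i) : ℝ) : ℂ)) *
    (star (hA.1.eigenvectorUnitary : Mat))

lemma psdSqrt_posSemidef {A : Mat} (hA : A.PosSemidef) : (psdSqrt hA).PosSemidef := by
  unfold psdSqrt
  have hdiag : (Matrix.diagonal
      (fun i => ((Real.sqrt (hA.1.eigenvalues i) : ℝ) : ℂ))).PosSemidef := by
    apply Matrix.PosSemidef.diagonal
    intro i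
    exact Complex.zero_le_real.mpr (Real.sqrt_nonneg _)
  have := hdiag.mul_mul_conjTranspose_same (hA.1.eigenvectorUnitary : Mat)
  simpa [Matrix.star_eq_conjTranspose] using this

lemma psdSqrt_mul_self {A : Mat} (hA : A.PosSemidef) : psdSqrt hA * psdSqrt hA = A := by
  have h2 : star (hA.1.eigenvectorUnitary : Mat) * (hA.1.eigenvectorUnitary : Mat) = 1 :=
    Matrix.mem_unitaryGroup_iff'.mp hA.1.eigenvectorUnitary.2
  unfold psdSqrt
  conv_rhs => rw [hA.1.spectral_theorem, Unitary.conjStarAlgAut_apply]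
  simp only [Matrix.mul_assoc]
  rw [← Matrix.mul_assoc (star _), h2, Matrix.one_mul, ← Matrix.mul_assoc (Matrix.diagonal _),
    Matrix.diagonal_mul_diagonal]
  have hf : (fun i => ((Real.sqrt (hA.1.eigenvalues i) : ℝ) : ℂ) *
      ((Real.sqrt (hA.1.eigenvalues i) : ℝ) : ℂ)) = RCLike.ofReal ∘ hA.1.eigenvalues := by
    funext i
    rw [← Complex.ofReal_mul, Real.mul_self_sqrt (hA.eigenvalues_nonneg i)]
    rfl
  rw [hf]

lemma commute_sqrt {Y A : Mat} (hA : A.PosSemidef) (h : Commute Y A) :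
    Commute Y (psdSqrt hA) := by
  have := commute_matFun hA.1 Real.sqrt h
  exact this

lemma mul_posSemidef {A B : Mat} (hA : A.PosSemidef) (hB : B.PosSemidef)
    (h : Commute A B) : (A * B).PosSemidef := by
  have hc : Commute B (psdSqrt hA) := commute_sqrt hA h.symm
  have hs := psdSqrt_posSemidef hA
  have key : A * B = psdSqrt hA * B * (psdSqrt hA)ᴴ := by
    rw [hs.1]
    calc A * B = psdSqrt hA * psdSqrt hA * B := by rw [psdSqrt_mul_self hA]
      _ = psdSqrt hA * (psdSqrt hA * B) := by rw [Matrix.mul_assoc]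
      _ = psdSqrt hA * (B * psdSqrt hA) := by rw [← hc.eq]
      _ = psdSqrt hA * B * psdSqrt hA := by rw [Matrix.mul_assoc]
  rw [key]
  exact hB.mul_mul_conjTranspose_same _

lemma commute_inv {A B : Mat} (h : Commute A B) (hB : IsUnit B.det) :
    Commute A B⁻¹ := by
  have h1 := Matrix.mul_nonsing_inv B hB
  have h2 := Matrix.nonsing_inv_mul B hB
  show A * B⁻¹ = B⁻¹ * A
  calc A * B⁻¹ = B⁻¹ * B * (A * B⁻¹) := by rw [h2, Matrix.one_mul]
    _ = B⁻¹ * (B * A) * B⁻¹ := by simp only [Matrix.mul_assoc]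
    _ = B⁻¹ * (A * B) * B⁻¹ := by rw [← h.eq]
    _ = B⁻¹ * A * (B * B⁻¹) := by simp only [Matrix.mul_assoc]
    _ = B⁻¹ * A := by rw [h1, Matrix.mul_one]

lemma trace_eq_sum {M : Mat} (hM : M.IsHermitian) :
    M.trace = ((∑ i, hM.eigenvalues i : ℝ) : ℂ) := by
  have h2 : star (hM.eigenvectorUnitary : Mat) * (hM.eigenvectorUnitary : Mat) = 1 :=
    Matrix.mem_unitaryGroup_iff'.mp hM.eigenvectorUnitary.2
  conv_lhs => rw [hM.spectral_theorem, Unitary.conjStarAlgAut_apply]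
  rw [Matrix.trace_mul_cycle, h2, Matrix.one_mul, Matrix.trace_diagonal]
  push_cast
  exact Finset.sum_congr rfl fun i _ => rfl

lemma det_ofReal {M : Mat} (hM : M.IsHermitian) :
    M.det = ((∏ i, hM.eigenvalues i : ℝ) : ℂ) := by
  rw [hM.det_eq_prod_eigenvalues]
  push_cast
  exact Finset.prod_congr rfl fun i _ => rfl

lemma trace_re_nonneg {A : Mat} (hA : A.PosSemidef) : 0 ≤ (A.trace).re := by
  obtain ⟨C, rfl⟩ : ∃ C : Mat, A = Cᴴ * C :=
    ⟨psdSqrt hA, by rw [(psdSqrt_posSemidef hA).1, psdSqrt_mul_self]⟩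
  rw [Matrix.trace]
  simp only [Complex.re_sum, Matrix.diag_apply, Matrix.mul_apply]
  apply Finset.sum_nonneg
  intro i _
  simp only [Complex.re_sum, Matrix.conjTranspose_apply]
  apply Finset.sum_nonneg
  intro j _
  have : (star (C j i) * C j i).re = Complex.normSq (C j i) := by
    simp [Complex.normSq_apply, Complex.mul_re, Complex.star_def]
  rw [this]
  exact Complex.normSq_nonneg _

lemma trace_mul_re_nonneg {A B : Mat} (hA : A.PosSemidef) (hB : B.PosSemidef) :
    0 ≤ ((A * B).trace).re := by
  obtain ⟨C, rfl⟩ : ∃ C : Mat, B = Cᴴ * C :=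
    ⟨psdSqrt hB, by rw [(psdSqrt_posSemidef hB).1, psdSqrt_mul_self]⟩
  have : A * (Cᴴ * C) = A * Cᴴ * C := by rw [Matrix.mul_assoc]
  rw [this, Matrix.trace_mul_cycle]
  exact trace_re_nonneg (hA.mul_mul_conjTranspose_same C)

lemma logdet_psd_bound {M : Mat} (hM : M.PosSemidef) (hdet : M.det ≠ 0) :
    0 < (M.det).re ∧ Real.log (M.det).re ≤ (M.trace).re - d := by
  have hdet' := det_ofReal hM.1
  have htr := trace_eq_sum hM.1
  have hnn : ∀ i, 0 ≤ hM.1.eigenvalues i := fun i => hM.eigenvalues_nonneg i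
  have hprod_ne : (∏ i, hM.1.eigenvalues i) ≠ 0 := by
    intro h0
    rw [hdet', h0] at hdet
    exact hdet (by norm_num)
  have hpos : ∀ i, 0 < hM.1.eigenvalues i := by
    intro i
    rcases lt_or_eq_of_le (hnn i) with h | h
    · exact h
    · exfalso; exact hprod_ne (Finset.prod_eq_zero (Finset.mem_univ i) h.symm)
  constructor
  · rw [hdet', Complex.ofReal_re]
    exact Finset.prod_pos fun i _ => hpos i
  · rw [hdet', htr, Complex.ofReal_re, Complex.ofReal_re]
    rw [Real.log_prod fun i _ => (hpos i).ne']
    have : ∀ i ∈ Finset.univ, Real.log (hM.1.eigenvalues i) ≤ hM.1.eigenvalues i - 1 :=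
      fun i _ => Real.log_le_sub_one_of_pos (hpos i)
    calc ∑ i, Real.log (hM.1.eigenvalues i) ≤ ∑ i, (hM.1.eigenvalues i - 1) :=
          Finset.sum_le_sum this
      _ = (∑ i, hM.1.eigenvalues i) - d := by
          rw [Finset.sum_sub_distrib]
          simp

lemma psdPart_apply {X : Mat} (hX : X.IsHermitian) : psdPart X = (hX.eigenvectorUnitary : Mat) *
    Matrix.diagonal (fun i => ((max (hX.eigenvalues i) 0 : ℝ) : ℂ)) *
    (star (hX.eigenvectorUnitary : Mat)) := dif_pos hX

lemma commute_psdPart {X Y : Mat} (hX : X.IsHermitian) (h : Commute Y X) : Commute Y (psdPart X) := by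
  rw [psdPart_apply hX]
  exact commute_matFun hX (fun t => max t 0) h

lemma psdPart_posSemidef {X : Mat} (hX : X.IsHermitian) : (psdPart X).PosSemidef := by
  rw [psdPart_apply hX]
  have hdiag : (Matrix.diagonal (fun i => ((max (hX.eigenvalues i) 0 : ℝ) : ℂ))).PosSemidef := by
    apply Matrix.PosSemidef.diagonal
    intro i
    exact Complex.zero_le_real.mpr (le_max_right _ _)
  have := hdiag.mul_mul_conjTranspose_same (hX.eigenvectorUnitary : Mat)
  simpa [Matrix.star_eq_conjTranspose] using this

lemma conj_mul_conj {U A B : Mat} (h2 : star U * U = 1) :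
    (U * A * star U) * (U * B * star U) = U * (A * B) * star U := by
  calc (U * A * star U) * (U * B * star U)
      = U * A * (star U * U) * B * star U := by simp only [Matrix.mul_assoc]
    _ = U * (A * B) * star U := by
        rw [h2]; simp only [Matrix.mul_assoc, Matrix.mul_one, Matrix.one_mul]

lemma psdPart_mul_self {X : Mat} (hX : X.IsHermitian) : psdPart X * psdPart X = X * psdPart X := by
  have h2 : star (hX.eigenvectorUnitary : Mat) * (hX.eigenvectorUnitary : Mat) = 1 :=
    Matrix.mem_unitaryGroup_iff'.mp hX.eigenvectorUnitary.2
  rw [psdPart_apply hX]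
  conv_rhs => lhs; rw [hX.spectral_theorem, Unitary.conjStarAlgAut_apply]
  rw [conj_mul_conj h2, conj_mul_conj h2, Matrix.diagonal_mul_diagonal,
    Matrix.diagonal_mul_diagonal]
  have hfun : (fun i => ((max (hX.eigenvalues i) 0 : ℝ) : ℂ) * ((max (hX.eigenvalues i) 0 : ℝ) : ℂ))
      = fun i => (RCLike.ofReal ∘ hX.eigenvalues) i * ((max (hX.eigenvalues i) 0 : ℝ) : ℂ) := by
    funext i
    show ((max (hX.eigenvalues i) 0 : ℝ) : ℂ) * ((max (hX.eigenvalues i) 0 : ℝ) : ℂ)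
      = ((hX.eigenvalues i : ℝ) : ℂ) * ((max (hX.eigenvalues i) 0 : ℝ) : ℂ)
    rw [← Complex.ofReal_mul, ← Complex.ofReal_mul]
    congr 1
    rcases le_total (hX.eigenvalues i) 0 with h | h
    · rw [max_eq_right h]; ring
    · rw [max_eq_left h]
  rw [hfun]

lemma psdPart_sub_posSemidef {X : Mat} (hX : X.IsHermitian) : (psdPart X - X).PosSemidef := by
  have hsub : psdPart X - X = (hX.eigenvectorUnitary : Mat) *
      Matrix.diagonal (fun i => ((max (hX.eigenvalues i) 0 - hX.eigenvalues i : ℝ) : ℂ)) *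
      (star (hX.eigenvectorUnitary : Mat)) := by
    rw [psdPart_apply hX]
    conv_lhs => rhs; rw [hX.spectral_theorem, Unitary.conjStarAlgAut_apply]
    rw [← Matrix.sub_mul, ← Matrix.mul_sub, Matrix.diagonal_sub]
    have hfun : (fun i => ((max (hX.eigenvalues i) 0 : ℝ) : ℂ) - (RCLike.ofReal ∘ hX.eigenvalues) i)
        = fun i => ((max (hX.eigenvalues i) 0 - hX.eigenvalues i : ℝ) : ℂ) := by
      funext i
      show ((max (hX.eigenvalues i) 0 : ℝ) : ℂ) - ((hX.eigenvalues i : ℝ) : ℂ) = _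
      push_cast
      ring
    rw [hfun]
  rw [hsub]
  have hdiag : (Matrix.diagonal
      (fun i => ((max (hX.eigenvalues i) 0 - hX.eigenvalues i : ℝ) : ℂ))).PosSemidef := by
    apply Matrix.PosSemidef.diagonal
    intro i
    exact Complex.zero_le_real.mpr (by simp [sub_nonneg, le_max_left])
  have := hdiag.mul_mul_conjTranspose_same (hX.eigenvectorUnitary : Mat)
  simpa [Matrix.star_eq_conjTranspose] using this

end WFAux

open WFAux

lemma logdet_mul {d : ℕ} {A M : Matrix (Fin d) (Fin d) ℂ} (hA : A.IsHermitian) (hM : M.IsHermitian)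
    (hA0 : A.det.re ≠ 0) (hM0 : M.det.re ≠ 0) :
    logdet (A * M) = logdet A + logdet M := by
  unfold logdet
  have h1 : (A * M).det.re = A.det.re * M.det.re := by
    rw [Matrix.det_mul, det_ofReal hA, det_ofReal hM, ← Complex.ofReal_mul]
    rw [Complex.ofReal_re, Complex.ofReal_re, Complex.ofReal_re]
  rw [h1, Real.log_mul hA0 hM0]

/-- matrix water-filling. Over PSD matrices `P` diagonal in the common
eigenbasis (i.e. commuting with `Σ₁` and `Σ₂`), the power-allocation objective
`w ln det(I + Σ₁P) − tr(Σ₂P)` is maximized at `P* = (w Σ₂⁻¹ − Σ₁⁻¹)⁺`. -/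
theorem waterfilling_matrix {d : ℕ} (S1 S2 : Matrix (Fin d) (Fin d) ℂ)
    (hS1 : S1.PosDef) (hS2 : S2.PosDef) (hcomm : Commute S1 S2)
    (w : ℝ) (hw : 0 < w) :
    ∀ P : Matrix (Fin d) (Fin d) ℂ, P.PosSemidef →
      Commute P S1 → Commute P S2 →
      w * logdet (1 + S1 * P) - (Matrix.trace (S2 * P)).re ≤
        w * logdet (1 + S1 * psdPart ((w : ℂ) • S2⁻¹ - S1⁻¹)) -
          (Matrix.trace (S2 * psdPart ((w : ℂ) • S2⁻¹ - S1⁻¹))).re := by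
  intro P hP hPS1 hPS2
  classical
  set X : Matrix (Fin d) (Fin d) ℂ := (w : ℂ) • S2⁻¹ - S1⁻¹ with hXdef
  have hS1u : IsUnit S1.det := (Matrix.isUnit_iff_isUnit_det _).mp hS1.isUnit
  have hS2u : IsUnit S2.det := (Matrix.isUnit_iff_isUnit_det _).mp hS2.isUnit
  have hXh : X.IsHermitian := by
    have h1 : (S1⁻¹).IsHermitian := hS1.isHermitian.inv
    have h2 : (S2⁻¹).IsHermitian := hS2.isHermitian.inv
    have h3 : ((w : ℂ) • S2⁻¹).IsHermitian := by
      show _ᴴ = _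
      rw [Matrix.conjTranspose_smul, Complex.star_def, Complex.conj_ofReal, h2.eq]
    exact h3.sub h1
  -- commutation facts
  have hcS1S1i : Commute S1 S1⁻¹ := commute_inv (Commute.refl S1) hS1u
  have hcS1S2i : Commute S1 S2⁻¹ := commute_inv hcomm hS2u
  have hcS2S1i : Commute S2 S1⁻¹ := commute_inv hcomm.symm hS1u
  have hcS2S2i : Commute S2 S2⁻¹ := commute_inv (Commute.refl S2) hS2u
  have hcS1X : Commute S1 X := (hcS1S2i.smul_right (w : ℂ)).sub_right hcS1S1i
  have hcS2X : Commute S2 X := (hcS2S2i.smul_right (w : ℂ)).sub_right hcS2S1i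
  have hcPX : Commute P X :=
    ((commute_inv hPS2 hS2u).smul_right (w : ℂ)).sub_right (commute_inv hPS1 hS1u)
  set Pstar : Matrix (Fin d) (Fin d) ℂ := psdPart X with hPstarDef
  have hcS1P : Commute S1 Pstar := commute_psdPart hXh hcS1X
  have hcS2P : Commute S2 Pstar := commute_psdPart hXh hcS2X
  have hcPP : Commute P Pstar := commute_psdPart hXh hcPX
  have hcXP : Commute X Pstar := commute_psdPart hXh (Commute.refl X)
  have hPsd : Pstar.PosSemidef := psdPart_posSemidef hXh
  set A : Matrix (Fin d) (Fin d) ℂ := 1 + S1 * Pstar with hAdef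
  set B : Matrix (Fin d) (Fin d) ℂ := 1 + S1 * P with hBdef
  have hS1Pstar_psd : (S1 * Pstar).PosSemidef := mul_posSemidef hS1.posSemidef hPsd hcS1P
  have hS1P_psd : (S1 * P).PosSemidef := mul_posSemidef hS1.posSemidef hP hPS1.symm
  have hA_pd : A.PosDef := Matrix.PosDef.one.add_posSemidef hS1Pstar_psd
  have hB_pd : B.PosDef := Matrix.PosDef.one.add_posSemidef hS1P_psd
  have hAu : IsUnit A.det := (Matrix.isUnit_iff_isUnit_det _).mp hA_pd.isUnit
  have hAinv_psd : (A⁻¹).PosSemidef := hA_pd.inv.posSemidef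
  -- commutes with A
  have hcS1A : Commute S1 A :=
    (Commute.one_right S1).add_right ((Commute.refl S1).mul_right hcS1P)
  have hcS2A : Commute S2 A :=
    (Commute.one_right S2).add_right (hcomm.symm.mul_right hcS2P)
  have hcXA : Commute X A :=
    (Commute.one_right X).add_right (hcS1X.symm.mul_right hcXP)
  have hcPstarA : Commute Pstar A :=
    (Commute.one_right Pstar).add_right (hcS1P.symm.mul_right (Commute.refl Pstar))
  have hcPA : Commute P A :=
    (Commute.one_right P).add_right (hPS1.mul_right hcPP)
  have hcAB : Commute A B := by
    have h1 : Commute (S1 * Pstar) (S1 * P) :=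
      Commute.mul_left ((Commute.refl S1).mul_right hPS1.symm)
        ((hcS1P.symm).mul_right (hcPP.symm))
    exact Commute.add_left (Commute.one_left _)
      ((Commute.one_right _).add_right h1)
  have hcS1Ainv : Commute S1 A⁻¹ := commute_inv hcS1A hAu
  have hcBAinv : Commute B A⁻¹ := commute_inv hcAB.symm hAu
  -- M := A⁻¹ * B
  have hM_psd : (A⁻¹ * B).PosSemidef :=
    mul_posSemidef hAinv_psd hB_pd.posSemidef hcBAinv.symm
  have hBAM : B = A * (A⁻¹ * B) := by
    rw [← Matrix.mul_assoc, Matrix.mul_nonsing_inv _ hAu, Matrix.one_mul]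
  have hBdetne : B.det ≠ 0 := by
    have := (Matrix.isUnit_iff_isUnit_det _).mp hB_pd.isUnit
    exact this.ne_zero
  have hdetMne : (A⁻¹ * B).det ≠ 0 := by
    intro h0
    have := congrArg Matrix.det hBAM
    rw [Matrix.det_mul, h0, mul_zero] at this
    exact hBdetne this
  have hlog := logdet_psd_bound hM_psd hdetMne
  have hAdet_re_pos : 0 < A.det.re := by
    have := hA_pd.det_pos
    rw [Complex.lt_def] at this
    simpa using this.1
  -- Step 1: concavity bound
  have step1 : w * logdet B ≤ w * logdet A + w * (((A⁻¹ * B).trace).re - d) := by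
    have e : logdet B = logdet A + logdet (A⁻¹ * B) := by
      conv_lhs => rw [hBAM]
      exact logdet_mul hA_pd.isHermitian hM_psd.1 hAdet_re_pos.ne' hlog.1.ne'
    have i : logdet (A⁻¹ * B) ≤ ((A⁻¹ * B).trace).re - d := hlog.2
    have := mul_le_mul_of_nonneg_left i hw.le
    rw [e]
    linarith [this]
  -- trace identity
  have hBA : B - A = S1 * (P - Pstar) := by
    rw [hAdef, hBdef, Matrix.mul_sub]
    abel
  have hMsub : A⁻¹ * B - 1 = A⁻¹ * (S1 * (P - Pstar)) := by
    rw [← hBA, Matrix.mul_sub, Matrix.nonsing_inv_mul _ hAu]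
  have htr1 : w * (((A⁻¹ * B).trace).re - d) =
      (((w : ℂ) • (A⁻¹ * (S1 * (P - Pstar)))).trace).re := by
    rw [← hMsub, Matrix.trace_smul, Matrix.trace_sub, Matrix.trace_one]
    simp [Complex.mul_re, Complex.sub_re, Complex.ofReal_re, Complex.ofReal_im]
  -- the multiplier matrix G
  set G : Matrix (Fin d) (Fin d) ℂ := S2 - (w : ℂ) • (S1 * A⁻¹) with hGdef
  have hGA : G * A = S2 * A - (w : ℂ) • S1 := by
    rw [hGdef, Matrix.sub_mul]
    congr 1
    rw [smul_mul_assoc, Matrix.mul_assoc, Matrix.nonsing_inv_mul _ hAu, Matrix.mul_one]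
  have e1 : S1 * S2 * X = (w : ℂ) • S1 - S2 := by
    rw [hXdef, Matrix.mul_sub]
    congr 1
    · rw [mul_smul_comm, Matrix.mul_assoc, Matrix.mul_nonsing_inv _ hS2u, Matrix.mul_one]
    · rw [hcomm.eq, Matrix.mul_assoc, Matrix.mul_nonsing_inv _ hS1u, Matrix.mul_one]
  have hGA2 : G * A = S1 * S2 * (Pstar - X) := by
    rw [hGA, Matrix.mul_sub, e1, hAdef, Matrix.mul_add, Matrix.mul_one, ← Matrix.mul_assoc,
      hcomm.symm.eq]
    abel
  have hG : G = S1 * S2 * (Pstar - X) * A⁻¹ := by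
    have h := congrArg (· * A⁻¹) hGA2
    rw [Matrix.mul_assoc, Matrix.mul_nonsing_inv _ hAu, Matrix.mul_one] at h
    exact h
  have hGpsd : G.PosSemidef := by
    rw [hG]
    have h12 : (S1 * S2).PosSemidef := mul_posSemidef hS1.posSemidef hS2.posSemidef hcomm
    have hPXpsd : (Pstar - X).PosSemidef := psdPart_sub_posSemidef hXh
    have hc1 : Commute (S1 * S2) (Pstar - X) :=
      Commute.mul_left (hcS1P.sub_right hcS1X) (hcS2P.sub_right hcS2X)
    have h123 : (S1 * S2 * (Pstar - X)).PosSemidef := mul_posSemidef h12 hPXpsd hc1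
    have hcA : Commute (S1 * S2 * (Pstar - X)) A⁻¹ :=
      commute_inv (Commute.mul_left (Commute.mul_left hcS1A hcS2A)
        (hcPstarA.sub_left hcXA)) hAu
    exact mul_posSemidef h123 hAinv_psd hcA
  have hGPstar : G * Pstar = 0 := by
    have h0 : G * Pstar * A = 0 := by
      have hswap : G * Pstar * A = G * A * Pstar := by
        rw [Matrix.mul_assoc, Matrix.mul_assoc, hcPstarA.eq]
      rw [hswap, hGA2]
      have h1 : (Pstar - X) * Pstar = 0 := by
        rw [Matrix.sub_mul, hPstarDef, psdPart_mul_self hXh, sub_self]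
      rw [Matrix.mul_assoc, h1, Matrix.mul_zero]
    have h := congrArg (· * A⁻¹) h0
    rw [Matrix.mul_assoc, Matrix.mul_nonsing_inv _ hAu, Matrix.mul_one, Matrix.zero_mul] at h
    exact h
  -- Step 2
  have step2 : (((w : ℂ) • (A⁻¹ * (S1 * (P - Pstar)))).trace).re ≤
      ((S2 * (P - Pstar)).trace).re := by
    have hGexp : S2 * (P - Pstar) - (w : ℂ) • (A⁻¹ * (S1 * (P - Pstar))) = G * (P - Pstar) := by
      rw [hGdef, Matrix.sub_mul]
      have hmm : A⁻¹ * (S1 * (P - Pstar)) = S1 * A⁻¹ * (P - Pstar) := by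
        rw [← Matrix.mul_assoc, hcS1Ainv.symm.eq]
      rw [hmm, smul_mul_assoc]
    have h1 : (G * (P - Pstar)).trace = (G * P).trace := by
      rw [Matrix.mul_sub, hGPstar, sub_zero]
    have h2 : 0 ≤ ((G * P).trace).re := trace_mul_re_nonneg hGpsd hP
    have h3 : ((S2 * (P - Pstar)).trace).re -
        (((w : ℂ) • (A⁻¹ * (S1 * (P - Pstar)))).trace).re = ((G * (P - Pstar)).trace).re := by
      rw [← hGexp, Matrix.trace_sub, Complex.sub_re]
    rw [h1] at h3
    linarith
  have hfin1 : ((S2 * (P - Pstar)).trace).re =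
      ((S2 * P).trace).re - ((S2 * Pstar).trace).re := by
    rw [Matrix.mul_sub, Matrix.trace_sub, Complex.sub_re]
  linarith [step1, htr1, step2, hfin1]
end
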